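/- For Re(b) > Re(a) > 0 and 0 ≤ y < 1, the n-th derivative formula holds: (d^n/dx^n) ₁F₁([a,b;y];x) = ((a)_n / (b)_n) · ₁F₁([a+n,b+n;y];x). -/

import Mathlib

/-!
The coefficients `[a,b;y]_k` are bounded in `k` (for `0 ≤ y < 1` the integrand of `B_y(a+k, b-a)`
is dominated by a multiple of `t^(Re a - 1)`), so `∑ c_k x^k/k!` may be differentiated term by
term on all of `ℂ`; its `n`-th derivative is `∑ c_(k+n) x^k/k!`. The recurrence
`Γ(z+n) = (z)_n Γ(z)` turns `B(a+n, b-a)` into `(a)_n/(b)_n · B(a, b-a)`, which gives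
`[a,b;y]_(k+n) = (a)_n/(b)_n · [a+n,b+n;y]_k`.
-/

open Complex

/-- Incomplete beta function `B_y(x,z) = ∫_0^y t^(x-1) (1-t)^(z-1) dt`. -/
noncomputable def incBeta (y : ℝ) (x z : ℂ) : ℂ :=
  ∫ t in (0:ℝ)..y, (t:ℂ)^(x-1) * (1 - (t:ℂ))^(z-1)

/-- Pochhammer symbol `(a)_n`. -/
noncomputable def poch (a : ℂ) (n : ℕ) : ℂ := ∏ i ∈ Finset.range n, (a + i)

/-- Incomplete Pochhammer ratio `[b,c;y]_n`. -/
noncomputable def ipochL (b c : ℂ) (y : ℝ) (n : ℕ) : ℂ :=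
  incBeta y (b + n) (c - b) / Complex.betaIntegral b (c - b)

/-- Incomplete Pochhammer ratio `{b,c;y}_n`. -/
noncomputable def ipochU (b c : ℂ) (y : ℝ) (n : ℕ) : ℂ :=
  incBeta (1 - y) (c - b) (b + n) / Complex.betaIntegral b (c - b)

/-- Gauss hypergeometric series `₂F₁(a,b;c;x)`. -/
noncomputable def hyp2F1 (a b c x : ℂ) : ℂ :=
  ∑' n : ℕ, poch a n * poch b n / poch c n * x^n / (n.factorial : ℂ)

/-- Incomplete Gauss hypergeometric function `₂F₁(a,[b,c;y];x)`. -/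
noncomputable def inc2F1L (a b c : ℂ) (y : ℝ) (x : ℂ) : ℂ :=
  ∑' n : ℕ, poch a n * ipochL b c y n * x^n / (n.factorial : ℂ)

/-- Incomplete Gauss hypergeometric function `₂F₁(a,{b,c;y};x)`. -/
noncomputable def inc2F1U (a b c : ℂ) (y : ℝ) (x : ℂ) : ℂ :=
  ∑' n : ℕ, poch a n * ipochU b c y n * x^n / (n.factorial : ℂ)

/-- Incomplete confluent hypergeometric function `₁F₁([a,b;y];x)`. -/
noncomputable def inc1F1L (a b : ℂ) (y : ℝ) (x : ℂ) : ℂ :=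
  ∑' n : ℕ, ipochL a b y n * x^n / (n.factorial : ℂ)

/-- Incomplete confluent hypergeometric function `₁F₁({a,b;y};x)`. -/
noncomputable def inc1F1U (a b : ℂ) (y : ℝ) (x : ℂ) : ℂ :=
  ∑' n : ℕ, ipochU a b y n * x^n / (n.factorial : ℂ)

/-- Incomplete Appell function `F₁[a,b,c;d;x,z;y]`. -/
noncomputable def incAppellF1 (a b c d x z : ℂ) (y : ℝ) : ℂ :=
  ∑' p : ℕ × ℕ, ipochL a d y (p.1 + p.2) * poch b p.1 * poch c p.2 *
    x^p.1 * z^p.2 / ((p.1.factorial : ℂ) * (p.2.factorial : ℂ))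

/-- Incomplete Riemann–Liouville fractional derivative `D_z^μ[f(z);y]`. -/
noncomputable def incRL (μ : ℂ) (f : ℂ → ℂ) (y : ℝ) (z : ℂ) : ℂ :=
  z^(-μ) / Complex.Gamma (-μ) * ∫ u in (0:ℝ)..y, f ((u:ℂ) * z) * (1 - (u:ℂ))^(-μ-1)

theorem summable_mul_nat_mul_pow_pred_div_factorial (M R : ℝ) :
    Summable fun k : ℕ ↦ M * (k * R ^ (k - 1)) / k.factorial := by
  refine (summable_nat_add_iff 1).mp ((Real.summable_pow_div_factorial R).mul_left M |>.congr
    fun k ↦ ?_)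
  rw [Nat.add_sub_cancel, Nat.factorial_succ]
  push_cast
  field_simp

section ExponentialTypeSeries

variable {𝕜 : Type*} [RCLike 𝕜] {c : ℕ → 𝕜} {M : ℝ}

theorem summable_mul_pow_div_factorial (hc : ∀ k, ‖c k‖ ≤ M) (x : 𝕜) :
    Summable fun k ↦ c k * x ^ k / k.factorial := by
  refine .of_norm_bounded ((Real.summable_pow_div_factorial ‖x‖).mul_left M) fun k ↦ ?_
  rw [norm_div, norm_mul, norm_pow, RCLike.norm_natCast, mul_div_assoc]
  gcongr
  exact hc k

theorem hasDerivAt_tsum_mul_pow_div_factorial (hc : ∀ k, ‖c k‖ ≤ M) (x : 𝕜) :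
    HasDerivAt (fun w ↦ ∑' k, c k * w ^ k / k.factorial)
      (∑' k, c (k + 1) * x ^ k / k.factorial) x := by
  set R := ‖x‖ + 1
  have hx : x ∈ Metric.ball (0 : 𝕜) R := by simp [R]
  have hbound : ∀ k, ∀ w ∈ Metric.ball (0 : 𝕜) R,
      ‖c k * (k * w ^ (k - 1)) / k.factorial‖ ≤ M * (k * R ^ (k - 1)) / k.factorial := by
    intro k w hw
    rw [mem_ball_zero_iff] at hw
    rw [norm_div, norm_mul, norm_mul, norm_pow, RCLike.norm_natCast, RCLike.norm_natCast]
    have hM : 0 ≤ M := (norm_nonneg _).trans (hc 0)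
    gcongr
    exact hc k
  have hderiv := hasDerivAt_tsum_of_isPreconnected
    (summable_mul_nat_mul_pow_pred_div_factorial M R) Metric.isOpen_ball
    (convex_ball (0 : 𝕜) R).isPreconnected
    (fun k w _ ↦ ((hasDerivAt_pow k w).const_mul (c k)).div_const (k.factorial : 𝕜))
    hbound hx (summable_mul_pow_div_factorial hc x) hx
  refine hderiv.congr_deriv ?_
  rw [(Summable.of_norm_bounded (summable_mul_nat_mul_pow_pred_div_factorial M R)
    fun k ↦ hbound k x hx).tsum_eq_zero_add]
  simp only [Nat.cast_zero, zero_mul, mul_zero, zero_div, zero_add, Nat.add_sub_cancel,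
    Nat.factorial_succ]
  refine tsum_congr fun k ↦ ?_
  push_cast
  field_simp

theorem iteratedDeriv_tsum_mul_pow_div_factorial (hc : ∀ k, ‖c k‖ ≤ M) (n : ℕ) :
    iteratedDeriv n (fun w ↦ ∑' k, c k * w ^ k / k.factorial) =
      fun x ↦ ∑' k, c (k + n) * x ^ k / k.factorial := by
  induction n with
  | zero => rfl
  | succ n ih =>
    rw [iteratedDeriv_succ, ih]
    ext x
    simpa only [add_right_comm _ 1 n, ← add_assoc] using
      (hasDerivAt_tsum_mul_pow_div_factorial (fun k ↦ hc (k + n)) x).deriv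

end ExponentialTypeSeries

theorem poch_succ (z : ℂ) (n : ℕ) : poch z (n + 1) = poch z n * (z + n) :=
  Finset.prod_range_succ _ _

theorem poch_ne_zero {z : ℂ} (hz : 0 < z.re) (n : ℕ) : poch z n ≠ 0 :=
  Finset.prod_ne_zero_iff.mpr fun i _ ↦
    ne_zero_of_re_pos (by simp only [add_re, natCast_re]; positivity)

theorem Complex.Gamma_add_nat_eq_poch_mul {z : ℂ} (hz : 0 < z.re) (n : ℕ) :
    Gamma (z + n) = poch z n * Gamma z := by
  induction n with
  | zero => simp [poch]
  | succ n ih =>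
    have hzn : z + n ≠ 0 := ne_zero_of_re_pos (by simp only [add_re, natCast_re]; positivity)
    rw [Nat.cast_succ, ← add_assoc, Gamma_add_one _ hzn, ih, poch_succ]
    ring

theorem Complex.betaIntegral_add_nat {u v : ℂ} (hu : 0 < u.re) (hv : 0 < v.re) (n : ℕ) :
    betaIntegral (u + n) v = poch u n / poch (u + v) n * betaIntegral u v := by
  have huv : 0 < (u + v).re := by simp only [add_re]; positivity
  have hun : 0 < (u + n).re := by
    simp only [add_re, natCast_re]; positivity
  rw [betaIntegral_eq_Gamma_mul_div _ _ hun hv, betaIntegral_eq_Gamma_mul_div _ _ hu hv,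
    add_right_comm, Gamma_add_nat_eq_poch_mul hu, Gamma_add_nat_eq_poch_mul huv]
  have := poch_ne_zero huv n
  have := Gamma_ne_zero_of_re_pos huv
  field_simp

theorem Complex.betaIntegral_ne_zero {u v : ℂ} (hu : 0 < u.re) (hv : 0 < v.re) :
    betaIntegral u v ≠ 0 := by
  rw [betaIntegral_eq_Gamma_mul_div _ _ hu hv]
  exact div_ne_zero (mul_ne_zero (Gamma_ne_zero_of_re_pos hu) (Gamma_ne_zero_of_re_pos hv))
    (Gamma_ne_zero_of_re_pos (by simp only [add_re]; positivity))

theorem ipochL_add_nat {a b : ℂ} (ha : 0 < a.re) (hab : a.re < b.re) (y : ℝ) (k n : ℕ) :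
    ipochL a b y (k + n) = poch a n / poch b n * ipochL (a + n) (b + n) y k := by
  have hba : 0 < (b - a).re := by simpa using hab
  have := poch_ne_zero ha n
  have := poch_ne_zero (ha.trans hab) n
  have := betaIntegral_ne_zero ha hba
  rw [ipochL, ipochL, add_sub_add_right_eq_sub, betaIntegral_add_nat ha hba, add_sub_cancel,
    Nat.cast_add, add_comm (k : ℂ), add_assoc]
  field_simp

theorem norm_integrand_incBeta_le {a v : ℂ} {y t : ℝ} (ht0 : 0 < t) (hty : t ≤ y) (hy1 : y < 1)
    (k : ℕ) :
    ‖(t : ℂ) ^ (a + k - 1) * (1 - (t : ℂ)) ^ (v - 1)‖ ≤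
      max 1 ((1 - y) ^ (v.re - 1)) * t ^ (a.re - 1) := by
  have h1t : 0 < 1 - t := by linarith
  rw [norm_mul, norm_cpow_eq_rpow_re_of_pos ht0,
    show 1 - (t : ℂ) = (1 - t : ℝ) by push_cast; rfl, norm_cpow_eq_rpow_re_of_pos h1t, mul_comm]
  simp only [sub_re, add_re, natCast_re, one_re]
  have hpow : t ^ (a.re + k - 1) ≤ t ^ (a.re - 1) := by
    rw [add_sub_right_comm, Real.rpow_add ht0, Real.rpow_natCast]
    exact mul_le_of_le_one_right (by positivity) (pow_le_one₀ ht0.le (by linarith))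
  have hfactor : (1 - t) ^ (v.re - 1) ≤ max 1 ((1 - y) ^ (v.re - 1)) := by
    rcases le_or_gt 0 (v.re - 1) with hq | hq
    · exact (Real.rpow_le_one h1t.le (by linarith) hq).trans (le_max_left _ _)
    · exact (Real.rpow_le_rpow_of_nonpos (by linarith) (by linarith) hq.le).trans
        (le_max_right _ _)
  exact mul_le_mul hfactor hpow (by positivity) (by positivity)

theorem exists_norm_incBeta_add_nat_le {a : ℂ} (ha : 0 < a.re) (v : ℂ) {y : ℝ} (hy0 : 0 ≤ y)
    (hy1 : y < 1) : ∃ M, ∀ k : ℕ, ‖incBeta y (a + k) v‖ ≤ M := by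
  set K := max 1 ((1 - y) ^ (v.re - 1))
  refine ⟨|∫ t in (0 : ℝ)..y, K * t ^ (a.re - 1)|, fun k ↦ ?_⟩
  refine intervalIntegral.norm_integral_le_abs_of_norm_le ?_
    ((intervalIntegral.intervalIntegrable_rpow' (by linarith)).const_mul K)
  rw [Set.uIoc_of_le hy0]
  filter_upwards [MeasureTheory.ae_restrict_mem measurableSet_Ioc] with t ⟨ht0, hty⟩
  exact norm_integrand_incBeta_le ht0 hty hy1 k

theorem exists_norm_ipochL_le {a : ℂ} (ha : 0 < a.re) (b : ℂ) {y : ℝ} (hy0 : 0 ≤ y)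
    (hy1 : y < 1) : ∃ M, ∀ k : ℕ, ‖ipochL a b y k‖ ≤ M := by
  obtain ⟨M, hM⟩ := exists_norm_incBeta_add_nat_le ha (b - a) hy0 hy1
  exact ⟨M / ‖betaIntegral a (b - a)‖, fun k ↦ by rw [ipochL, norm_div]; gcongr; exact hM k⟩

theorem stmt12 (a b : ℂ) (y : ℝ) (x : ℂ) (n : ℕ)
    (ha : 0 < a.re) (hab : a.re < b.re) (hy0 : 0 ≤ y) (hy1 : y < 1) :
    iteratedDeriv n (fun w : ℂ => inc1F1L a b y w) x =
      (poch a n / poch b n) * inc1F1L (a + n) (b + n) y x := by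
  obtain ⟨M, hM⟩ := exists_norm_ipochL_le ha b hy0 hy1
  simp only [inc1F1L]
  rw [iteratedDeriv_tsum_mul_pow_div_factorial hM n, ← tsum_mul_left]
  refine tsum_congr fun k ↦ ?_
  rw [ipochL_add_nat ha hab]
  ring
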